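/- arXiv:1704.05373 — 11 statements merged into one kernel-verified Lean document; each statement's English description precedes it below -/
import Mathlib

section
/- Let a, b, c be positive real numbers satisfying the strict triangle inequalities a < b + c, b < a + c, c < a + b (the side lengths of a Euclidean triangle). Then 2abc/((a+b-c)(a+c-b)(b+c-a)) ≥ (abc + a³ + b³ + c³)/(2abc) ≥ a/b + b/c + c/a − 1 ≥ (2/3)(a/b + b/c + c/a) ≥ 2. -/
/-!
Clear denominators and use the Ravi substitution `a = y + z`, `b = z + x`, `c = x + y` with
`x, y, z > 0`. Then `(2abc)² - 8xyz (abc + a³ + b³ + c³) = 8·Schur(xy, yz, zx) + 4 Σ (x²(y - z))²`,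
and the second inequality becomes `2 (x²z + xy² + yz² - 3xyz) ≥ 0`. This cyclic AM-GM inequality,
now in `a, b, c` and divided by `abc`, is also `a/b + b/c + c/a ≥ 3`, which gives the last two.
-/

theorem schur_nonneg_of_le {u v w : ℝ} (hw : 0 ≤ w) (hwv : w ≤ v) (hvu : v ≤ u) :
    0 ≤ u * (u - v) * (u - w) + v * (v - u) * (v - w) + w * (w - u) * (w - v) := by
  have key : u * (u - v) * (u - w) + v * (v - u) * (v - w) + w * (w - u) * (w - v)
      = (u - v) ^ 2 * (u + v - w) + w * ((u - w) * (v - w)) := by ring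
  have : 0 ≤ (u - w) * (v - w) := mul_nonneg (by linarith) (by linarith)
  have : 0 ≤ u + v - w := by linarith
  rw [key]
  positivity

theorem schur_nonneg {u v w : ℝ} (hu : 0 ≤ u) (hv : 0 ≤ v) (hw : 0 ≤ w) :
    0 ≤ u * (u - v) * (u - w) + v * (v - u) * (v - w) + w * (w - u) * (w - v) := by
  rcases le_total u v with h₁ | h₁ <;> rcases le_total v w with h₂ | h₂ <;>
    rcases le_total u w with h₃ | h₃
  all_goals first
    | linear_combination schur_nonneg_of_le hu h₁ h₂
    | linear_combination schur_nonneg_of_le hu h₃ h₂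
    | linear_combination schur_nonneg_of_le hv h₁ h₃
    | linear_combination schur_nonneg_of_le hv h₂ h₃
    | linear_combination schur_nonneg_of_le hw h₂ h₁
    | linear_combination schur_nonneg_of_le hw h₃ h₁

theorem three_mul_le_sq_mul_add_mul_sq_add_mul_sq {a b c : ℝ} (ha : 0 ≤ a) (hb : 0 ≤ b)
    (hc : 0 ≤ c) : 3 * (a * b * c) ≤ a ^ 2 * c + a * b ^ 2 + b * c ^ 2 := by
  nlinarith [mul_nonneg ha (sq_nonneg (b - c)), mul_nonneg hb (sq_nonneg (c - a)),
    mul_nonneg hc (sq_nonneg (a - b)), mul_nonneg (mul_nonneg ha hb) hc]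

theorem three_le_div_add_div_add_div {a b c : ℝ} (ha : 0 < a) (hb : 0 < b) (hc : 0 < c) :
    3 ≤ a / b + b / c + c / a := by
  have h : a / b + b / c + c / a = (a ^ 2 * c + a * b ^ 2 + b * c ^ 2) / (a * b * c) := by
    field_simp
  rw [h, le_div_iff₀ (by positivity)]
  exact three_mul_le_sq_mul_add_mul_sq_add_mul_sq ha.le hb.le hc.le

theorem exists_ravi_substitution {a b c : ℝ} (hab : a < b + c) (hbc : b < a + c)
    (hca : c < a + b) :
    ∃ x y z : ℝ, 0 < x ∧ 0 < y ∧ 0 < z ∧ a = y + z ∧ b = z + x ∧ c = x + y :=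
  ⟨(b + c - a) / 2, (a + c - b) / 2, (a + b - c) / 2, by linarith, by linarith, by linarith,
    by ring, by ring, by ring⟩

theorem triangle_euler_ineq {a b c : ℝ} (hab : a < b + c) (hbc : b < a + c) (hca : c < a + b) :
    (a + b - c) * (a + c - b) * (b + c - a) * (a * b * c + a ^ 3 + b ^ 3 + c ^ 3)
      ≤ (2 * a * b * c) ^ 2 := by
  obtain ⟨x, y, z, hx, hy, hz, rfl, rfl, rfl⟩ := exists_ravi_substitution hab hbc hca
  linear_combination 8 * schur_nonneg (mul_pos hx hy).le (mul_pos hy hz).le (mul_pos hz hx).le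
    + 4 * sq_nonneg (x ^ 2 * (y - z)) + 4 * sq_nonneg (y ^ 2 * (z - x))
    + 4 * sq_nonneg (z ^ 2 * (x - y))

theorem triangle_cyclic_ineq {a b c : ℝ} (hab : a < b + c) (hbc : b < a + c)
    (hca : c < a + b) :
    2 * (a ^ 2 * c + a * b ^ 2 + b * c ^ 2) ≤ a ^ 3 + b ^ 3 + c ^ 3 + 3 * (a * b * c) := by
  obtain ⟨x, y, z, hx, hy, hz, rfl, rfl, rfl⟩ := exists_ravi_substitution hab hbc hca
  linear_combination 2 * three_mul_le_sq_mul_add_mul_sq_add_mul_sq hx.le hy.le hz.le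

theorem stmt_0 (a b c : ℝ) (ha : 0 < a) (hb : 0 < b) (hc : 0 < c)
    (hab : a < b + c) (hbc : b < a + c) (hca : c < a + b) :
    2 * a * b * c / ((a + b - c) * (a + c - b) * (b + c - a)) ≥
      (a * b * c + a ^ 3 + b ^ 3 + c ^ 3) / (2 * a * b * c) ∧
    (a * b * c + a ^ 3 + b ^ 3 + c ^ 3) / (2 * a * b * c) ≥
      a / b + b / c + c / a - 1 ∧
    a / b + b / c + c / a - 1 ≥ 2 / 3 * (a / b + b / c + c / a) ∧
    2 / 3 * (a / b + b / c + c / a) ≥ 2 := by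
  have habc : 0 < 2 * a * b * c := by positivity
  have hP : 0 < (a + b - c) * (a + c - b) * (b + c - a) :=
    mul_pos (mul_pos (by linarith) (by linarith)) (by linarith)
  have hS := three_le_div_add_div_add_div ha hb hc
  refine ⟨?_, ?_, by linarith, by linarith⟩
  · rw [ge_iff_le, div_le_div_iff₀ habc hP]
    linear_combination triangle_euler_ineq hab hbc hca
  · have h : (a / b + b / c + c / a - 1) * (2 * a * b * c)
        = 2 * (a ^ 2 * c + a * b ^ 2 + b * c ^ 2) - 2 * (a * b * c) := by
      field_simp
    rw [ge_iff_le, le_div_iff₀ habc, h]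
    linarith [triangle_cyclic_ineq hab hbc hca]
end

section
/- Let f : ℝ → ℝ → ℝ → ℝ be a function such that f(x, y, z) ≥ 0 for all positive reals x, y, z satisfying the strict triangle inequalities x < y + z, y < x + z, z < x + y. Then for all positive reals a, b, c satisfying the strict triangle inequalities a < b + c, b < a + c, c < a + b together with a + b + c < 2π, one has f(sin(a/2), sin(b/2), sin(c/2)) ≥ 0. -/
/-!
If `a < b + c` and `a + b + c < 2π`, then `a/2` is closer to `π/2` than `(b + c)/2` is, so
`sin (a/2) < sin ((b + c)/2)`; and `sin (u + v) ≤ sin u + sin v` whenever `sin u, sin v ≥ 0`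
because cosines are at most one. Together they give the triangle inequalities for the
`sin (·/2)` of the sides; positivity holds because each side is less than `π`.
-/

open Real

lemma Real.sin_lt_sin_of_lt_of_add_lt_pi {x y : ℝ} (hx : 0 ≤ x) (hxy : x < y)
    (hsum : x + y < π) : sin x < sin y := by
  have hsin : 0 < sin ((y - x) / 2) := sin_pos_of_pos_of_lt_pi (by linarith) (by linarith)
  have hcos : 0 < cos ((y + x) / 2) := cos_pos_of_mem_Ioo ⟨by linarith, by linarith⟩
  have := sin_sub_sin y x
  nlinarith [mul_pos hsin hcos]

lemma Real.sin_add_le_sin_add_sin {x y : ℝ} (hx : 0 ≤ sin x) (hy : 0 ≤ sin y) :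
    sin (x + y) ≤ sin x + sin y := by
  rw [sin_add]
  nlinarith [cos_le_one x, cos_le_one y]

lemma Real.sin_half_lt_sin_half_add_sin_half {a b c : ℝ} (ha : 0 ≤ a) (hb : 0 ≤ b) (hc : 0 ≤ c)
    (habc : a < b + c) (hsum : a + b + c < 2 * π) :
    sin (a / 2) < sin (b / 2) + sin (c / 2) :=
  calc sin (a / 2) < sin (b / 2 + c / 2) :=
        sin_lt_sin_of_lt_of_add_lt_pi (by linarith) (by linarith) (by linarith)
    _ ≤ sin (b / 2) + sin (c / 2) :=
        sin_add_le_sin_add_sin (sin_nonneg_of_nonneg_of_le_pi (by linarith) (by linarith))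
          (sin_nonneg_of_nonneg_of_le_pi (by linarith) (by linarith))

theorem stmt_2 (f : ℝ → ℝ → ℝ → ℝ)
    (hf : ∀ x y z : ℝ, 0 < x → 0 < y → 0 < z →
      x < y + z → y < x + z → z < x + y → f x y z ≥ 0)
    (a b c : ℝ) (ha : 0 < a) (hb : 0 < b) (hc : 0 < c)
    (hab : a < b + c) (hbc : b < a + c) (hca : c < a + b)
    (hsum : a + b + c < 2 * Real.pi) :
    f (Real.sin (a / 2)) (Real.sin (b / 2)) (Real.sin (c / 2)) ≥ 0 := by
  have ha_lt : a < π := by linarith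
  have hb_lt : b < π := by linarith
  have hc_lt : c < π := by linarith
  apply hf
  · exact sin_pos_of_pos_of_lt_pi (by linarith) (by linarith)
  · exact sin_pos_of_pos_of_lt_pi (by linarith) (by linarith)
  · exact sin_pos_of_pos_of_lt_pi (by linarith) (by linarith)
  · exact sin_half_lt_sin_half_add_sin_half ha.le hb.le hc.le hab hsum
  · exact sin_half_lt_sin_half_add_sin_half hb.le ha.le hc.le hbc (by linarith)
  · exact sin_half_lt_sin_half_add_sin_half hc.le ha.le hb.le hca (by linarith)
end

section
/- Let a, b, c be positive real numbers satisfying the strict triangle inequalities a < b + c, b < a + c, c < a + b. Then sinh((a+b-c)/2)·sinh((a+c-b)/2)·sinh((b+c-a)/2) ≥ (sinh(a/2)+sinh(b/2)−sinh(c/2))·(sinh(a/2)+sinh(c/2)−sinh(b/2))·(sinh(b/2)+sinh(c/2)−sinh(a/2)). -/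
/-!
Put `x = a/2`, `y = b/2`, `z = c/2`. Each pair of factors is compared through the identity
`sinh (x+y-z) sinh (x+z-y) - (sinh x + sinh y - sinh z)(sinh x + sinh z - sinh y)
  = 2 sinh y sinh z (cosh (y-z) - 1) ≥ 0`.
Any two factors on the right add up to some `2 sinh (·/2) > 0`, so at most one of them is
negative; if one is, the right-hand side is nonpositive. Otherwise multiplying the three pairwise
bounds compares the squares of the two sides.
-/

open Real

lemma mul_mul_le_mul_mul_of_pairwise {u v w p q r : ℝ} (hp : 0 ≤ p) (hq : 0 ≤ q) (hr : 0 ≤ r)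
    (huv : 0 ≤ u + v) (huw : 0 ≤ u + w) (hvw : 0 ≤ v + w)
    (h₁ : u * v ≤ p * q) (h₂ : u * w ≤ p * r) (h₃ : v * w ≤ q * r) :
    u * v * w ≤ p * q * r := by
  have hpqr : 0 ≤ p * q * r := by positivity
  rcases lt_or_ge u 0 with hu | hu
  · nlinarith [mul_nonneg (by linarith : 0 ≤ v) (by linarith : 0 ≤ w)]
  rcases lt_or_ge v 0 with hv | hv
  · nlinarith [mul_nonneg hu (by linarith : 0 ≤ w)]
  rcases lt_or_ge w 0 with hw | hw
  · nlinarith [mul_nonneg hu hv]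
  have hsq : (u * v * w) ^ 2 ≤ (p * q * r) ^ 2 :=
    calc (u * v * w) ^ 2 = u * v * (u * w) * (v * w) := by ring
      _ ≤ p * q * (p * r) * (q * r) := by gcongr
      _ = (p * q * r) ^ 2 := by ring
  exact le_of_pow_le_pow_left₀ two_ne_zero hpqr hsq

lemma sinh_add_sub_mul_sinh_add_sub_sub (x y z : ℝ) :
    sinh (x + y - z) * sinh (x + z - y) -
        (sinh x + sinh y - sinh z) * (sinh x + sinh z - sinh y) =
      2 * sinh y * sinh z * (cosh (y - z) - 1) := by
  simp only [sinh_eq, cosh_eq, exp_add, exp_sub, exp_neg]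
  field_simp
  ring

lemma sinh_add_sub_mul_le {y z : ℝ} (x : ℝ) (hy : 0 ≤ y) (hz : 0 ≤ z) :
    (sinh x + sinh y - sinh z) * (sinh x + sinh z - sinh y) ≤
      sinh (x + y - z) * sinh (x + z - y) := by
  have hcosh : 0 ≤ cosh (y - z) - 1 := sub_nonneg.2 (one_le_cosh _)
  have := mul_nonneg (mul_nonneg (mul_nonneg zero_le_two (sinh_nonneg_iff.2 hy))
    (sinh_nonneg_iff.2 hz)) hcosh
  linarith [sinh_add_sub_mul_sinh_add_sub_sub x y z]

lemma sinh_sub_mul_le_of_triangle {x y z : ℝ} (hxy : z < x + y) (hxz : y < x + z)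
    (hyz : x < y + z) :
    (sinh x + sinh y - sinh z) * (sinh x + sinh z - sinh y) * (sinh y + sinh z - sinh x) ≤
      sinh (x + y - z) * sinh (x + z - y) * sinh (y + z - x) := by
  have hx : 0 ≤ x := by linarith
  have hy : 0 ≤ y := by linarith
  have hz : 0 ≤ z := by linarith
  have hsx := sinh_nonneg_iff.2 hx
  have hsy := sinh_nonneg_iff.2 hy
  have hsz := sinh_nonneg_iff.2 hz
  have h₂ := sinh_add_sub_mul_le y hx hz
  have h₃ := sinh_add_sub_mul_le z hx hy
  rw [add_comm y x, add_comm (sinh y) (sinh x)] at h₂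
  rw [add_comm z x, add_comm z y, add_comm (sinh z) (sinh x), add_comm (sinh z) (sinh y)] at h₃
  refine mul_mul_le_mul_mul_of_pairwise ?_ ?_ ?_ (by linarith) (by linarith) (by linarith)
    (sinh_add_sub_mul_le x hy hz) h₂ h₃ <;>
  exact sinh_nonneg_iff.2 (by linarith)

theorem stmt_3_general (a b c : ℝ)
    (hab : a < b + c) (hbc : b < a + c) (hca : c < a + b) :
    Real.sinh ((a + b - c) / 2) * Real.sinh ((a + c - b) / 2) *
        Real.sinh ((b + c - a) / 2) ≥
      (Real.sinh (a / 2) + Real.sinh (b / 2) - Real.sinh (c / 2)) *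
        (Real.sinh (a / 2) + Real.sinh (c / 2) - Real.sinh (b / 2)) *
        (Real.sinh (b / 2) + Real.sinh (c / 2) - Real.sinh (a / 2)) := by
  simp only [add_div, sub_div]
  exact sinh_sub_mul_le_of_triangle (by linarith) (by linarith) (by linarith)

theorem stmt_3 (a b c : ℝ) (ha : 0 < a) (hb : 0 < b) (hc : 0 < c)
    (hab : a < b + c) (hbc : b < a + c) (hca : c < a + b) :
    Real.sinh ((a + b - c) / 2) * Real.sinh ((a + c - b) / 2) *
        Real.sinh ((b + c - a) / 2) ≥
      (Real.sinh (a / 2) + Real.sinh (b / 2) - Real.sinh (c / 2)) *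
        (Real.sinh (a / 2) + Real.sinh (c / 2) - Real.sinh (b / 2)) *
        (Real.sinh (b / 2) + Real.sinh (c / 2) - Real.sinh (a / 2)) :=
  stmt_3_general a b c hab hbc hca
end

section
/- Let a, b, c be positive real numbers satisfying the strict triangle inequalities a < b + c, b < a + c, c < a + b together with a + b + c < 2π. Then sin((a+b-c)/2)·sin((a+c-b)/2)·sin((b+c-a)/2) ≤ (sin(a/2)+sin(b/2)−sin(c/2))·(sin(a/2)+sin(c/2)−sin(b/2))·(sin(b/2)+sin(c/2)−sin(a/2)). -/
/-!
Put `x = a/2`, `y = b/2`, `z = c/2`. Writing `x + y - z = x + (y - z)` and `x + z - y = x - (y - z)`,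
`sin (x + y - z) * sin (x + z - y) = sin x ^ 2 - sin (y - z) ^ 2`, while the matching pair of factors
on the right is `sin x ^ 2 - (sin y - sin z) ^ 2`. Since
`sin (y - z) ^ 2 - (sin y - sin z) ^ 2 = 2 * sin y * sin z * (1 - cos (y - z)) ≥ 0`,
each pair of factors on the left is dominated by the corresponding pair on the right. Multiplying the
three pairwise inequalities compares the squares of the two products, and all factors are nonnegative.
-/

theorem mul_mul_le_mul_mul_of_pairwise_s4 {R : Type*} [CommSemiring R] [LinearOrder R]
    [IsStrictOrderedRing R] {l₁ l₂ l₃ r₁ r₂ r₃ : R}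
    (hl₁ : 0 ≤ l₁) (hl₂ : 0 ≤ l₂) (hl₃ : 0 ≤ l₃) (hr₁ : 0 ≤ r₁) (hr₂ : 0 ≤ r₂) (hr₃ : 0 ≤ r₃)
    (h₁₂ : l₁ * l₂ ≤ r₁ * r₂) (h₁₃ : l₁ * l₃ ≤ r₁ * r₃) (h₂₃ : l₂ * l₃ ≤ r₂ * r₃) :
    l₁ * l₂ * l₃ ≤ r₁ * r₂ * r₃ := by
  refine le_of_pow_le_pow_left₀ two_ne_zero (by positivity) ?_
  calc (l₁ * l₂ * l₃) ^ 2 = l₁ * l₂ * (l₁ * l₃) * (l₂ * l₃) := by ring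
    _ ≤ r₁ * r₂ * (r₁ * r₃) * (r₂ * r₃) := by gcongr
    _ = (r₁ * r₂ * r₃) ^ 2 := by ring

namespace Real

theorem sin_add_mul_sin_sub (x y : ℝ) : sin (x + y) * sin (x - y) = sin x ^ 2 - sin y ^ 2 := by
  rw [sin_add, sin_sub]
  linear_combination sin x ^ 2 * sin_sq_add_cos_sq y - sin y ^ 2 * sin_sq_add_cos_sq x

theorem sq_sin_sub_sin_le_sq_sin_sub {y z : ℝ} (h : 0 ≤ sin y * sin z) :
    (sin y - sin z) ^ 2 ≤ sin (y - z) ^ 2 := by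
  have key : sin (y - z) ^ 2 - (sin y - sin z) ^ 2 = 2 * (sin y * sin z) * (1 - cos (y - z)) := by
    rw [sin_sub, cos_sub]
    linear_combination sin y ^ 2 * sin_sq_add_cos_sq z + sin z ^ 2 * sin_sq_add_cos_sq y
  nlinarith [mul_nonneg h (sub_nonneg.2 (cos_le_one (y - z)))]

theorem sin_add_sub_mul_sin_add_sub_le (x : ℝ) {y z : ℝ} (h : 0 ≤ sin y * sin z) :
    sin (x + y - z) * sin (x + z - y) ≤ (sin x + sin y - sin z) * (sin x + sin z - sin y) := by
  have hprod := sin_add_mul_sin_sub x (y - z)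
  rw [add_sub_assoc', sub_sub_eq_add_sub] at hprod
  nlinarith [sq_sin_sub_sin_le_sq_sin_sub h]

theorem sin_add_le_sin_add_sin_s4 {x y : ℝ} (hx : 0 ≤ sin x) (hy : 0 ≤ sin y) :
    sin (x + y) ≤ sin x + sin y := by
  rw [sin_add]
  nlinarith [cos_le_one x, cos_le_one y]

theorem sin_le_sin_add_sin {x y z : ℝ} (hx : 0 ≤ x) (hy : 0 ≤ y) (hz : 0 ≤ z) (hxyz : z ≤ x + y)
    (hπ : x + y + z ≤ π) : sin z ≤ sin x + sin y := by
  have hsin : 0 ≤ sin ((x + y - z) / 2) := sin_nonneg_of_nonneg_of_le_pi (by linarith) (by linarith)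
  have hcos : 0 ≤ cos ((x + y + z) / 2) := cos_nonneg_of_mem_Icc ⟨by linarith, by linarith⟩
  have hz_le : sin z ≤ sin (x + y) := by
    rw [← sub_nonneg, sin_sub_sin]
    positivity
  exact hz_le.trans <| sin_add_le_sin_add_sin_s4
    (sin_nonneg_of_nonneg_of_le_pi hx (by linarith)) (sin_nonneg_of_nonneg_of_le_pi hy (by linarith))

theorem sin_mul_sin_mul_sin_le_of_triangle {x y z : ℝ} (hx : 0 ≤ x) (hy : 0 ≤ y) (hz : 0 ≤ z)
    (hxy : z ≤ x + y) (hxz : y ≤ x + z) (hyz : x ≤ y + z) (hπ : x + y + z ≤ π) :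
    sin (x + y - z) * sin (x + z - y) * sin (y + z - x) ≤
      (sin x + sin y - sin z) * (sin x + sin z - sin y) * (sin y + sin z - sin x) := by
  have hsx : 0 ≤ sin x := sin_nonneg_of_nonneg_of_le_pi hx (by linarith)
  have hsy : 0 ≤ sin y := sin_nonneg_of_nonneg_of_le_pi hy (by linarith)
  have hsz : 0 ≤ sin z := sin_nonneg_of_nonneg_of_le_pi hz (by linarith)
  refine mul_mul_le_mul_mul_of_pairwise_s4
    (sin_nonneg_of_nonneg_of_le_pi (by linarith) (by linarith))
    (sin_nonneg_of_nonneg_of_le_pi (by linarith) (by linarith))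
    (sin_nonneg_of_nonneg_of_le_pi (by linarith) (by linarith))
    (sub_nonneg.2 (sin_le_sin_add_sin hx hy hz hxy hπ))
    (sub_nonneg.2 (sin_le_sin_add_sin hx hz hy hxz (by linarith)))
    (sub_nonneg.2 (sin_le_sin_add_sin hy hz hx hyz (by linarith)))
    (sin_add_sub_mul_sin_add_sub_le x (mul_nonneg hsy hsz)) ?_ ?_
  · have h := sin_add_sub_mul_sin_add_sub_le y (mul_nonneg hsx hsz)
    rwa [add_comm y x, add_comm (sin y) (sin x)] at h
  · have h := sin_add_sub_mul_sin_add_sub_le z (mul_nonneg hsx hsy)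
    rwa [add_comm z x, add_comm z y, add_comm (sin z) (sin x), add_comm (sin z) (sin y)] at h

end Real

theorem stmt_4 (a b c : ℝ) (ha : 0 < a) (hb : 0 < b) (hc : 0 < c)
    (hab : a < b + c) (hbc : b < a + c) (hca : c < a + b)
    (hsum : a + b + c < 2 * Real.pi) :
    Real.sin ((a + b - c) / 2) * Real.sin ((a + c - b) / 2) *
        Real.sin ((b + c - a) / 2) ≤
      (Real.sin (a / 2) + Real.sin (b / 2) - Real.sin (c / 2)) *
        (Real.sin (a / 2) + Real.sin (c / 2) - Real.sin (b / 2)) *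
        (Real.sin (b / 2) + Real.sin (c / 2) - Real.sin (a / 2)) := by
  have h := Real.sin_mul_sin_mul_sin_le_of_triangle (x := a / 2) (y := b / 2) (z := c / 2)
    (by positivity) (by positivity) (by positivity)
    (by linarith) (by linarith) (by linarith) (by linarith)
  convert h using 4 <;> ring
end

section
/- Let a, b, c be real numbers with 0 ≤ c ≤ b ≤ a. Then sinh((b+c-a)/2) ≥ sinh(b/2) + sinh(c/2) − sinh(a/2). -/
/-! The pairs `(b/2, c/2)` and `((b+c-a)/2, a/2)` have the same nonnegative sum `(b+c)/2`, and
`sinh x + sinh y = 2 sinh ((x+y)/2) cosh ((x-y)/2)`. Since `cosh` is even and increasing on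
`[0, ∞)`, the pair with the larger spread `|x - y|`, which is the second one as `b ≤ a`, has the
larger sum of `sinh`s. -/

open Real

theorem Real.sinh_add_sinh (x y : ℝ) :
    sinh x + sinh y = 2 * sinh ((x + y) / 2) * cosh ((x - y) / 2) := by
  calc sinh x + sinh y
      = sinh ((x + y) / 2 + (x - y) / 2) + sinh ((x + y) / 2 - (x - y) / 2) := by ring_nf
    _ = 2 * sinh ((x + y) / 2) * cosh ((x - y) / 2) := by rw [sinh_add, sinh_sub]; ring

theorem Real.sinh_add_sinh_le_of_add_eq {p q r s : ℝ} (hsum : p + q = r + s) (hnonneg : 0 ≤ p + q)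
    (hspread : |p - q| ≤ |r - s|) : sinh p + sinh q ≤ sinh r + sinh s := by
  rw [sinh_add_sinh, sinh_add_sinh, hsum]
  have hsinh : 0 ≤ sinh ((r + s) / 2) := sinh_nonneg_iff.2 (by linarith)
  have hcosh : cosh ((p - q) / 2) ≤ cosh ((r - s) / 2) := by
    rw [cosh_le_cosh, abs_div, abs_div]
    gcongr
  gcongr

theorem stmt_5 (a b c : ℝ) (hc : 0 ≤ c) (hcb : c ≤ b) (hba : b ≤ a) :
    Real.sinh ((b + c - a) / 2) ≥
      Real.sinh (b / 2) + Real.sinh (c / 2) - Real.sinh (a / 2) := by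
  have hspread : |b / 2 - c / 2| ≤ |(b + c - a) / 2 - a / 2| := by
    rw [abs_of_nonneg (by linarith), abs_of_nonpos (by linarith)]
    linarith
  have hsum := sinh_add_sinh_le_of_add_eq (by ring) (by linarith) hspread
  linarith
end

section
/- For all real numbers a, b, c, the identity sinh((a+b-c)/2)·sinh((a+c-b)/2) − (sinh(a/2)+sinh(b/2)−sinh(c/2))·(sinh(a/2)+sinh(c/2)−sinh(b/2)) = 4·sinh(b/2)·sinh(c/2)·sinh²((b−c)/4) holds. In particular, if b ≥ 0 and c ≥ 0 then sinh((a+b-c)/2)·sinh((a+c-b)/2) ≥ (sinh(a/2)+sinh(b/2)−sinh(c/2))·(sinh(a/2)+sinh(c/2)−sinh(b/2)). -/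
/-! With `x, y, z` the half-sides, both products are differences of squares with the same
first term `sinh² x`: `sinh (x + d) * sinh (x - d) = sinh² x - sinh² d` for `d = y - z`, and
`(sinh x + e) * (sinh x - e) = sinh² x - e²` for `e = sinh y - sinh z`. So `x` drops out and
the difference is `(sinh y - sinh z)² - sinh² (y - z) = 2 sinh y sinh z (cosh (y - z) - 1)`. -/

namespace Real

theorem sinh_add_mul_sinh_sub (x y : ℝ) :
    sinh (x + y) * sinh (x - y) = sinh x ^ 2 - sinh y ^ 2 := by
  rw [sinh_add, sinh_sub]
  linear_combination sinh x ^ 2 * cosh_sq y - sinh y ^ 2 * cosh_sq x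

theorem sinh_sub_sinh_sq_sub_sinh_sub_sq (y z : ℝ) :
    (sinh y - sinh z) ^ 2 - sinh (y - z) ^ 2 = 4 * sinh y * sinh z * sinh ((y - z) / 2) ^ 2 := by
  have hcosh : cosh (y - z) = 1 + 2 * sinh ((y - z) / 2) ^ 2 := by
    rw [← mul_div_cancel₀ (y - z) (two_ne_zero' ℝ), cosh_two_mul, cosh_sq', mul_div_cancel₀ _ two_ne_zero]
    ring
  rw [sinh_sub]
  linear_combination 2 * sinh y * sinh z * (hcosh - cosh_sub y z)
    - sinh y ^ 2 * cosh_sq z - sinh z ^ 2 * cosh_sq y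

theorem sinh_add_sub_mul_sinh_add_sub_sub_mul (x y z : ℝ) :
    sinh (x + y - z) * sinh (x + z - y) -
        (sinh x + sinh y - sinh z) * (sinh x + sinh z - sinh y) =
      4 * sinh y * sinh z * sinh ((y - z) / 2) ^ 2 := by
  have hprod : sinh (x + y - z) * sinh (x + z - y) = sinh x ^ 2 - sinh (y - z) ^ 2 := by
    rw [← sinh_add_mul_sinh_sub]; ring_nf
  rw [hprod, ← sinh_sub_sinh_sq_sub_sinh_sub_sq]
  ring

end Real

theorem stmt_6 (a b c : ℝ) :
    Real.sinh ((a + b - c) / 2) * Real.sinh ((a + c - b) / 2) -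
        (Real.sinh (a / 2) + Real.sinh (b / 2) - Real.sinh (c / 2)) *
          (Real.sinh (a / 2) + Real.sinh (c / 2) - Real.sinh (b / 2)) =
      4 * Real.sinh (b / 2) * Real.sinh (c / 2) * Real.sinh ((b - c) / 4) ^ 2 ∧
    (0 ≤ b → 0 ≤ c →
      Real.sinh ((a + b - c) / 2) * Real.sinh ((a + c - b) / 2) ≥
        (Real.sinh (a / 2) + Real.sinh (b / 2) - Real.sinh (c / 2)) *
          (Real.sinh (a / 2) + Real.sinh (c / 2) - Real.sinh (b / 2))) := by
  have key := Real.sinh_add_sub_mul_sinh_add_sub_sub_mul (a / 2) (b / 2) (c / 2)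
  rw [show a / 2 + b / 2 - c / 2 = (a + b - c) / 2 by ring,
    show a / 2 + c / 2 - b / 2 = (a + c - b) / 2 by ring,
    show (b / 2 - c / 2) / 2 = (b - c) / 4 by ring] at key
  refine ⟨key, fun hb hc => ?_⟩
  have : 0 ≤ 4 * Real.sinh (b / 2) * Real.sinh (c / 2) * Real.sinh ((b - c) / 4) ^ 2 := by positivity
  linarith
end

section
/- Let a, b, c be real numbers with 0 < c ≤ b ≤ a satisfying a < b + c and a + b + c < 2π. Then sin((b+c-a)/2) ≤ sin(b/2) + sin(c/2) − sin(a/2). -/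
/-! By sum-to-product, `sin x + sin y = 2 sin ((x + y) / 2) cos ((x - y) / 2)`. Both sides of the
inequality are such sums with the same `x + y = (b + c) / 2`, so the claim reduces to comparing the
cosines of the half-differences, `(b - c) / 4 ≤ (2a - b - c) / 4`, on which `cos` is decreasing. -/

open Real

theorem Real.sin_add_sin_le_of_abs_sub_le {x y u v : ℝ} (hsum : x + y = u + v)
    (hsum_nonneg : 0 ≤ x + y) (hsum_le : x + y ≤ 2 * π)
    (hspread : |x - y| ≤ |u - v|) (hspread_le : |u - v| ≤ 2 * π) :
    sin u + sin v ≤ sin x + sin y := by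
  have hsin : 0 ≤ sin ((x + y) / 2) := sin_nonneg_of_nonneg_of_le_pi (by linarith) (by linarith)
  have hcos : cos ((u - v) / 2) ≤ cos ((x - y) / 2) := by
    rw [← cos_abs ((u - v) / 2), ← cos_abs ((x - y) / 2), abs_div, abs_div, abs_two]
    exact cos_le_cos_of_nonneg_of_le_pi (by positivity) (by linarith) (by gcongr)
  rw [sin_add_sin, sin_add_sin, ← hsum]
  gcongr

theorem stmt_7_general (a b c : ℝ) (hcb : c ≤ b) (hba : b ≤ a)
    (hab : a < b + c) (hsum : a + b + c < 2 * Real.pi) :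
    Real.sin ((b + c - a) / 2) ≤
      Real.sin (b / 2) + Real.sin (c / 2) - Real.sin (a / 2) := by
  have hspread : |b / 2 - c / 2| ≤ |a / 2 - (b + c - a) / 2| := by
    rw [abs_of_nonneg (by linarith), abs_of_nonneg (by linarith)]
    linarith
  have key := sin_add_sin_le_of_abs_sub_le (x := b / 2) (y := c / 2) (u := a / 2)
    (v := (b + c - a) / 2) (by ring) (by linarith) (by linarith) hspread
    (by rw [abs_of_nonneg (by linarith)]; linarith)
  linarith

theorem stmt_7 (a b c : ℝ) (hc : 0 < c) (hcb : c ≤ b) (hba : b ≤ a)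
    (hab : a < b + c) (hsum : a + b + c < 2 * Real.pi) :
    Real.sin ((b + c - a) / 2) ≤
      Real.sin (b / 2) + Real.sin (c / 2) - Real.sin (a / 2) :=
  stmt_7_general a b c hcb hba hab hsum
end

section
/- For all real numbers a, b, c, the identity (sin(a/2)+sin(b/2)−sin(c/2))·(sin(a/2)+sin(c/2)−sin(b/2)) − sin((a+b-c)/2)·sin((a+c-b)/2) = 4·sin(b/2)·sin(c/2)·sin²((b−c)/4) holds. In particular, if 0 ≤ b ≤ 2π and 0 ≤ c ≤ 2π then sin((a+b-c)/2)·sin((a+c-b)/2) ≤ (sin(a/2)+sin(b/2)−sin(c/2))·(sin(a/2)+sin(c/2)−sin(b/2)). -/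
/-!
With `x = a/2`, `y = b/2`, `z = c/2`, the first product is `sin² x - (sin y - sin z)²` and the
second is `sin(x + (y - z)) sin(x - (y - z)) = sin² x - sin² (y - z)`, so the difference is
`sin² (y - z) - (sin y - sin z)² = 4 sin y sin z sin² ((y - z)/2)`. For `b, c ∈ [0, 2π]` both
`sin y` and `sin z` are nonnegative, whence the inequality.
-/

namespace Real

theorem sin_sub_sq (y z : ℝ) :
    sin (y - z) ^ 2 = (sin y - sin z) ^ 2 + 4 * sin y * sin z * sin ((y - z) / 2) ^ 2 := by
  rw [sin_sq_eq_half_sub ((y - z) / 2), show 2 * ((y - z) / 2) = y - z by ring, sin_sub, cos_sub]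
  linear_combination sin z ^ 2 * sin_sq_add_cos_sq y + sin y ^ 2 * sin_sq_add_cos_sq z

theorem sin_half_sub_products (a b c : ℝ) :
    (sin (a / 2) + sin (b / 2) - sin (c / 2)) * (sin (a / 2) + sin (c / 2) - sin (b / 2)) -
        sin ((a + b - c) / 2) * sin ((a + c - b) / 2) =
      4 * sin (b / 2) * sin (c / 2) * sin ((b - c) / 4) ^ 2 := by
  have hd := sin_sub_sq (b / 2) (c / 2)
  rw [show (b / 2 - c / 2) / 2 = (b - c) / 4 by ring] at hd
  rw [show (a + b - c) / 2 = a / 2 + (b / 2 - c / 2) by ring,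
    show (a + c - b) / 2 = a / 2 - (b / 2 - c / 2) by ring, sin_add_mul_sin_sub]
  linear_combination hd

end Real

open Real in
theorem stmt_8 (a b c : ℝ) :
    (Real.sin (a / 2) + Real.sin (b / 2) - Real.sin (c / 2)) *
          (Real.sin (a / 2) + Real.sin (c / 2) - Real.sin (b / 2)) -
        Real.sin ((a + b - c) / 2) * Real.sin ((a + c - b) / 2) =
      4 * Real.sin (b / 2) * Real.sin (c / 2) * Real.sin ((b - c) / 4) ^ 2 ∧
    (0 ≤ b → b ≤ 2 * Real.pi → 0 ≤ c → c ≤ 2 * Real.pi →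
      Real.sin ((a + b - c) / 2) * Real.sin ((a + c - b) / 2) ≤
        (Real.sin (a / 2) + Real.sin (b / 2) - Real.sin (c / 2)) *
          (Real.sin (a / 2) + Real.sin (c / 2) - Real.sin (b / 2))) := by
  refine ⟨sin_half_sub_products a b c, fun hb hb' hc hc' => ?_⟩
  have hsb : 0 ≤ sin (b / 2) := sin_nonneg_of_nonneg_of_le_pi (by linarith) (by linarith)
  have hsc : 0 ≤ sin (c / 2) := sin_nonneg_of_nonneg_of_le_pi (by linarith) (by linarith)
  have hdiff : 0 ≤ 4 * sin (b / 2) * sin (c / 2) * sin ((b - c) / 4) ^ 2 := by positivity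
  linarith [sin_half_sub_products a b c]
end

section
/- Let a, b, c be positive real numbers satisfying the strict triangle inequalities a < b + c, b < a + c, c < a + b. Then 2abc/((a+b-c)(a+c-b)(b+c-a)) ≥ (a+b)(a+c)(b+c)/(4abc) ≥ 2, and equality holds throughout if and only if a = b = c. -/
/-! Both inequalities reduce, after clearing denominators, to sum-of-squares identities:
`(a+b)(a+c)(b+c) - 8abc = a(b-c)² + b(a-c)² + c(a-b)²`, and
`8(abc)² - (a+b)(a+c)(b+c)(a+b-c)(a+c-b)(b+c-a)` is `a+b+c` times a sum of terms
`ab(a+b-c)(a-b)²`, which are nonnegative for the sides of a triangle. -/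

lemma add_mul_add_mul_add_sub_eight_mul (a b c : ℝ) :
    (a + b) * (a + c) * (b + c) - 8 * a * b * c =
      a * (b - c) ^ 2 + b * (a - c) ^ 2 + c * (a - b) ^ 2 := by
  ring

lemma eight_mul_le_add_mul_add_mul_add {a b c : ℝ} (ha : 0 ≤ a) (hb : 0 ≤ b) (hc : 0 ≤ c) :
    8 * a * b * c ≤ (a + b) * (a + c) * (b + c) := by
  have := add_mul_add_mul_add_sub_eight_mul a b c
  nlinarith [mul_nonneg ha (sq_nonneg (b - c)), mul_nonneg hb (sq_nonneg (a - c)),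
    mul_nonneg hc (sq_nonneg (a - b))]

lemma add_mul_add_mul_add_eq_eight_mul_iff {a b c : ℝ} (ha : 0 < a) (hb : 0 < b) (hc : 0 < c) :
    (a + b) * (a + c) * (b + c) = 8 * a * b * c ↔ a = b ∧ b = c := by
  constructor
  · intro h
    have hsum : a * (b - c) ^ 2 + b * (a - c) ^ 2 + c * (a - b) ^ 2 = 0 := by
      rw [← add_mul_add_mul_add_sub_eight_mul, h, sub_self]
    have hbc := mul_nonneg ha.le (sq_nonneg (b - c))
    have hac := mul_nonneg hb.le (sq_nonneg (a - c))
    have hab := mul_nonneg hc.le (sq_nonneg (a - b))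
    have hab0 : c * (a - b) ^ 2 = 0 := by linarith
    have hbc0 : a * (b - c) ^ 2 = 0 := by linarith
    rw [mul_eq_zero, or_iff_right hc.ne', sq_eq_zero_iff, sub_eq_zero] at hab0
    rw [mul_eq_zero, or_iff_right ha.ne', sq_eq_zero_iff, sub_eq_zero] at hbc0
    exact ⟨hab0, hbc0⟩
  · rintro ⟨rfl, rfl⟩
    ring

lemma eight_mul_sq_sub_add_mul_add_mul_add_mul_triangle (a b c : ℝ) :
    8 * (a * b * c) ^ 2 -
        (a + b) * (a + c) * (b + c) * ((a + b - c) * (a + c - b) * (b + c - a)) =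
      (a + b + c) * (a * b * (a + b - c) * (a - b) ^ 2 + a * c * (a + c - b) * (a - c) ^ 2 +
        b * c * (b + c - a) * (b - c) ^ 2) := by
  ring

lemma add_mul_add_mul_add_mul_triangle_le {a b c : ℝ}
    (hab : a < b + c) (hbc : b < a + c) (hca : c < a + b) :
    (a + b) * (a + c) * (b + c) * ((a + b - c) * (a + c - b) * (b + c - a)) ≤
      8 * (a * b * c) ^ 2 := by
  have ha : 0 ≤ a := by linarith
  have hb : 0 ≤ b := by linarith
  have hc : 0 ≤ c := by linarith
  have hx : 0 ≤ a + b - c := by linarith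
  have hy : 0 ≤ a + c - b := by linarith
  have hz : 0 ≤ b + c - a := by linarith
  have hsum : 0 ≤ (a + b + c) * (a * b * (a + b - c) * (a - b) ^ 2 +
      a * c * (a + c - b) * (a - c) ^ 2 + b * c * (b + c - a) * (b - c) ^ 2) := by
    positivity
  linarith [eight_mul_sq_sub_add_mul_add_mul_add_mul_triangle a b c]

theorem stmt_9_general (a b c : ℝ)
    (hab : a < b + c) (hbc : b < a + c) (hca : c < a + b) :
    2 * a * b * c / ((a + b - c) * (a + c - b) * (b + c - a)) ≥
      (a + b) * (a + c) * (b + c) / (4 * a * b * c) ∧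
    (a + b) * (a + c) * (b + c) / (4 * a * b * c) ≥ 2 ∧
    ((2 * a * b * c / ((a + b - c) * (a + c - b) * (b + c - a)) =
        (a + b) * (a + c) * (b + c) / (4 * a * b * c) ∧
      (a + b) * (a + c) * (b + c) / (4 * a * b * c) = 2) ↔
      a = b ∧ b = c) := by
  have ha : 0 < a := by linarith
  have hb : 0 < b := by linarith
  have hc : 0 < c := by linarith
  have hxyz : 0 < (a + b - c) * (a + c - b) * (b + c - a) := by
    have : 0 < a + b - c := by linarith
    have : 0 < a + c - b := by linarith
    have : 0 < b + c - a := by linarith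
    positivity
  have habc : 0 < 4 * a * b * c := by positivity
  have hmid : (a + b) * (a + c) * (b + c) / (4 * a * b * c) = 2 ↔
      (a + b) * (a + c) * (b + c) = 8 * a * b * c := by
    rw [div_eq_iff habc.ne']
    constructor <;> intro h <;> linarith
  refine ⟨?_, ?_, ?_⟩
  · rw [ge_iff_le, div_le_div_iff₀ habc hxyz]
    linarith [add_mul_add_mul_add_mul_triangle_le hab hbc hca]
  · rw [ge_iff_le, le_div_iff₀ habc]
    linarith [eight_mul_le_add_mul_add_mul_add ha.le hb.le hc.le]
  · rw [hmid, add_mul_add_mul_add_eq_eight_mul_iff ha hb hc]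
    constructor
    · exact And.right
    · rintro ⟨rfl, rfl⟩
      refine ⟨?_, rfl, rfl⟩
      rw [div_eq_div_iff hxyz.ne' habc.ne']
      ring

theorem stmt_9 (a b c : ℝ) (ha : 0 < a) (hb : 0 < b) (hc : 0 < c)
    (hab : a < b + c) (hbc : b < a + c) (hca : c < a + b) :
    2 * a * b * c / ((a + b - c) * (a + c - b) * (b + c - a)) ≥
      (a + b) * (a + c) * (b + c) / (4 * a * b * c) ∧
    (a + b) * (a + c) * (b + c) / (4 * a * b * c) ≥ 2 ∧
    ((2 * a * b * c / ((a + b - c) * (a + c - b) * (b + c - a)) =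
        (a + b) * (a + c) * (b + c) / (4 * a * b * c) ∧
      (a + b) * (a + c) * (b + c) / (4 * a * b * c) = 2) ↔
      a = b ∧ b = c) :=
  stmt_9_general a b c hab hbc hca
end

section
/- Let a, b, c be positive real numbers satisfying the strict triangle inequalities a < b + c, b < a + c, c < a + b. Then 8a²b²c² ≥ (a+b-c)(a+c-b)(b+c-a)(a+b)(a+c)(b+c). -/
/-!
Ravi substitution `x = b + c - a`, `y = c + a - b`, `z = a + b - c` turns the triangle
inequalities into `x, y, z > 0` and gives `x + y = 2c`, `y + z = 2a`, `z + x = 2b`, so that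
`8 a²b²c² = ((x+y)(y+z)(z+x))² / 8`. Writing `s = x + y + z = a + b + c` and
`q = xy + yz + zx`, the inequality follows from the chain
`81 ((x+y)(y+z)(z+x))² ≥ 64 s² q² ≥ 192 xyz s³` together with AM-GM
`27 (a+b)(b+c)(c+a) ≤ 8 s³`.
-/

section OrderedCommRing

variable {R : Type*} [CommRing R] [LinearOrder R] [IsStrictOrderedRing R]

theorem three_mul_mul_mul_add_add_le_sq (x y z : R) :
    3 * (x * y * z) * (x + y + z) ≤ (x * y + y * z + z * x) ^ 2 := by
  nlinarith [sq_nonneg (x * y - y * z), sq_nonneg (y * z - z * x), sq_nonneg (z * x - x * y)]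

/-- `(x+y)(y+z)(z+x) = (x+y+z)(xy+yz+zx) - xyz`, and `xyz ≤ (x+y+z)(xy+yz+zx) / 9`. -/
theorem eight_mul_add_mul_add_le_nine_mul_add_mul_add {x y z : R}
    (hx : 0 ≤ x) (hy : 0 ≤ y) (hz : 0 ≤ z) :
    8 * ((x + y + z) * (x * y + y * z + z * x)) ≤ 9 * ((x + y) * (y + z) * (z + x)) := by
  nlinarith [mul_nonneg hx (sq_nonneg (y - z)), mul_nonneg hy (sq_nonneg (z - x)),
    mul_nonneg hz (sq_nonneg (x - y))]

theorem twenty_seven_mul_mul_le_add_add_pow_three {u v w : R}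
    (hu : 0 ≤ u) (hv : 0 ≤ v) (hw : 0 ≤ w) :
    27 * (u * v * w) ≤ (u + v + w) ^ 3 := by
  have hs : 0 ≤ u + v + w := by positivity
  nlinarith [mul_nonneg hs (sq_nonneg (u - v)), mul_nonneg hs (sq_nonneg (v - w)),
    mul_nonneg hs (sq_nonneg (w - u)), mul_nonneg hu (sq_nonneg (v - w)),
    mul_nonneg hv (sq_nonneg (w - u)), mul_nonneg hw (sq_nonneg (u - v))]

theorem sixty_four_mul_mul_add_pow_three_le_sq {x y z : R}
    (hx : 0 ≤ x) (hy : 0 ≤ y) (hz : 0 ≤ z) :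
    64 * (x * y * z * (x + y + z) ^ 3) ≤ 27 * ((x + y) * (y + z) * (z + x)) ^ 2 := by
  set s := x + y + z
  set q := x * y + y * z + z * x
  set P := (x + y) * (y + z) * (z + x)
  have hP : 8 * (s * q) ≤ 9 * P := eight_mul_add_mul_add_le_nine_mul_add_mul_add hx hy hz
  have hq : 3 * (x * y * z) * s ≤ q ^ 2 := three_mul_mul_mul_add_add_le_sq x y z
  have h : 3 * (64 * (x * y * z * s ^ 3)) ≤ 3 * (27 * P ^ 2) :=
    calc 3 * (64 * (x * y * z * s ^ 3)) = 64 * (3 * (x * y * z) * s) * s ^ 2 := by ring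
      _ ≤ 64 * q ^ 2 * s ^ 2 := by gcongr
      _ = (8 * (s * q)) ^ 2 := by ring
      _ ≤ (9 * P) ^ 2 := by gcongr
      _ = 3 * (27 * P ^ 2) := by ring
  linarith

end OrderedCommRing

theorem stmt_14_general (a b c : ℝ)
    (hab : a < b + c) (hbc : b < a + c) (hca : c < a + b) :
    8 * a ^ 2 * b ^ 2 * c ^ 2 ≥
      (a + b - c) * (a + c - b) * (b + c - a) * (a + b) * (a + c) * (b + c) := by
  have hx : 0 ≤ b + c - a := by linarith
  have hy : 0 ≤ a + c - b := by linarith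
  have hz : 0 ≤ a + b - c := by linarith
  calc (a + b - c) * (a + c - b) * (b + c - a) * (a + b) * (a + c) * (b + c)
      = (b + c - a) * (a + c - b) * (a + b - c) * (27 * ((a + b) * (a + c) * (b + c))) / 27 := by
        ring
    _ ≤ (b + c - a) * (a + c - b) * (a + b - c) * (a + b + (a + c) + (b + c)) ^ 3 / 27 := by
        gcongr
        exact twenty_seven_mul_mul_le_add_add_pow_three (by linarith) (by linarith) (by linarith)
    _ = 64 * ((b + c - a) * (a + c - b) * (a + b - c)
          * ((b + c - a) + (a + c - b) + (a + b - c)) ^ 3) / 216 := by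
        ring
    _ ≤ 27 * (((b + c - a) + (a + c - b)) * ((a + c - b) + (a + b - c))
          * ((a + b - c) + (b + c - a))) ^ 2 / 216 := by
        gcongr ?_ / _
        exact sixty_four_mul_mul_add_pow_three_le_sq hx hy hz
    _ = 8 * a ^ 2 * b ^ 2 * c ^ 2 := by ring

theorem stmt_14 (a b c : ℝ) (ha : 0 < a) (hb : 0 < b) (hc : 0 < c)
    (hab : a < b + c) (hbc : b < a + c) (hca : c < a + b) :
    8 * a ^ 2 * b ^ 2 * c ^ 2 ≥
      (a + b - c) * (a + c - b) * (b + c - a) * (a + b) * (a + c) * (b + c) :=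
  stmt_14_general a b c hab hbc hca
end

section
/- Let a, b, c be positive real numbers satisfying the strict triangle inequalities a < b + c, b < a + c, c < a + b. Then 2abc/((a+b-c)(a+c-b)(b+c-a)) ≥ (abc + a³ + b³ + c³)/(2abc) ≥ (1/2)(a/b + b/a + a/c + c/a + b/c + c/b) − 1 ≥ (1/3)(a/b + b/a + a/c + c/a + b/c + c/b) ≥ (a+b)(a+c)(b+c)/(4abc) ≥ 2. -/
/-!
Write `S = a/b + b/a + a/c + c/a + b/c + c/b`, so that `abc · S = Σ_sym a²b` and
`(a+b)(a+c)(b+c) = abc · (S + 2)`. The last three inequalities are then all equivalent to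
`S ≥ 6`, i.e. to `t + 1/t ≥ 2`, and the second one is Schur's inequality for `a, b, c`.
For the first one put `x = b+c-a`, `y = a+c-b`, `z = a+b-c` (Ravi substitution): then
`16 (abc)² - 4xyz (abc + a³ + b³ + c³) = 16 (a-b)²(b-c)²(c-a)² + Schur(yz, zx, xy)`,
a perfect square plus Schur's inequality applied to `yz, zx, xy`.
-/

variable {K : Type*} [Field K] [LinearOrder K] [IsStrictOrderedRing K]

section Schur

theorem schur_inequality_of_le {x y z : K} (hz : 0 ≤ z) (hzy : z ≤ y) (hyx : y ≤ x) :
    0 ≤ x * (x - y) * (x - z) + y * (y - x) * (y - z) + z * (z - x) * (z - y) := by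
  have h : x * (x - y) * (x - z) + y * (y - x) * (y - z) + z * (z - x) * (z - y) =
      (x - y) ^ 2 * (x + y - z) + z * ((x - z) * (y - z)) := by ring
  rw [h]
  exact add_nonneg (mul_nonneg (sq_nonneg _) (by linarith))
    (mul_nonneg hz (mul_nonneg (by linarith) (by linarith)))

theorem schur_inequality {x y z : K} (hx : 0 ≤ x) (hy : 0 ≤ y) (hz : 0 ≤ z) :
    0 ≤ x * (x - y) * (x - z) + y * (y - x) * (y - z) + z * (z - x) * (z - y) := by
  rcases le_total x y with hxy | hyx <;> rcases le_total y z with hyz | hzy <;>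
    rcases le_total x z with hxz | hzx
  all_goals first
    | linarith [schur_inequality_of_le hx hxy hyz] | linarith [schur_inequality_of_le hx hxz hzy]
    | linarith [schur_inequality_of_le hy hyx hxz] | linarith [schur_inequality_of_le hy hyz hzx]
    | linarith [schur_inequality_of_le hz hzx hxy] | linarith [schur_inequality_of_le hz hzy hyx]

end Schur

theorem two_le_div_add_div {a b : K} (ha : 0 < a) (hb : 0 < b) : 2 ≤ a / b + b / a := by
  rw [div_add_div _ _ hb.ne' ha.ne', le_div_iff₀ (by positivity)]
  nlinarith [sq_nonneg (a - b)]

def ratioSum (a b c : K) : K := a / b + b / a + a / c + c / a + b / c + c / b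

theorem six_le_ratioSum {a b c : K} (ha : 0 < a) (hb : 0 < b) (hc : 0 < c) :
    6 ≤ ratioSum a b c := by
  unfold ratioSum
  linarith [two_le_div_add_div ha hb, two_le_div_add_div ha hc, two_le_div_add_div hb hc]

theorem prod_add_div_eq_ratioSum {a b c : K} (ha : a ≠ 0) (hb : b ≠ 0) (hc : c ≠ 0) :
    (a + b) * (a + c) * (b + c) / (4 * a * b * c) = 1 / 4 * ratioSum a b c + 1 / 2 := by
  unfold ratioSum
  field_simp
  ring

theorem half_ratioSum_sub_one_le {a b c : K} (ha : 0 < a) (hb : 0 < b) (hc : 0 < c) :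
    1 / 2 * ratioSum a b c - 1 ≤ (a * b * c + a ^ 3 + b ^ 3 + c ^ 3) / (2 * a * b * c) := by
  have h : (a * b * c + a ^ 3 + b ^ 3 + c ^ 3) / (2 * a * b * c) - (1 / 2 * ratioSum a b c - 1) =
      (a * (a - b) * (a - c) + b * (b - a) * (b - c) + c * (c - a) * (c - b)) /
        (2 * a * b * c) := by
    unfold ratioSum
    field_simp
    ring
  have h2abc : (0 : K) ≤ 2 * a * b * c := by positivity
  linarith [div_nonneg (schur_inequality ha.le hb.le hc.le) h2abc]

theorem abc_add_sum_cubes_div_le_of_triangle {a b c : K} (ha : 0 < a) (hb : 0 < b) (hc : 0 < c)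
    (hab : a < b + c) (hbc : b < a + c) (hca : c < a + b) :
    (a * b * c + a ^ 3 + b ^ 3 + c ^ 3) / (2 * a * b * c) ≤
      2 * a * b * c / ((a + b - c) * (a + c - b) * (b + c - a)) := by
  set x := b + c - a
  set y := a + c - b
  set z := a + b - c
  have hx : 0 < x := by linarith
  have hy : 0 < y := by linarith
  have hz : 0 < z := by linarith
  have ravi : 16 * (a * b * c) ^ 2 - 4 * (z * y * x) * (a * b * c + a ^ 3 + b ^ 3 + c ^ 3) =
      16 * ((a - b) * (b - c) * (c - a)) ^ 2 + (y * z * (y * z - z * x) * (y * z - x * y) +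
        z * x * (z * x - y * z) * (z * x - x * y) + x * y * (x * y - y * z) * (x * y - z * x)) := by
    simp only [x, y, z]
    ring
  have hschur := schur_inequality (mul_pos hy hz).le (mul_pos hz hx).le (mul_pos hx hy).le
  rw [div_le_div_iff₀ (by positivity) (by positivity)]
  nlinarith [sq_nonneg ((a - b) * (b - c) * (c - a))]

theorem stmt_16 (a b c : ℝ) (ha : 0 < a) (hb : 0 < b) (hc : 0 < c)
    (hab : a < b + c) (hbc : b < a + c) (hca : c < a + b) :
    2 * a * b * c / ((a + b - c) * (a + c - b) * (b + c - a)) ≥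
      (a * b * c + a ^ 3 + b ^ 3 + c ^ 3) / (2 * a * b * c) ∧
    (a * b * c + a ^ 3 + b ^ 3 + c ^ 3) / (2 * a * b * c) ≥
      1 / 2 * (a / b + b / a + a / c + c / a + b / c + c / b) - 1 ∧
    1 / 2 * (a / b + b / a + a / c + c / a + b / c + c / b) - 1 ≥
      1 / 3 * (a / b + b / a + a / c + c / a + b / c + c / b) ∧
    1 / 3 * (a / b + b / a + a / c + c / a + b / c + c / b) ≥
      (a + b) * (a + c) * (b + c) / (4 * a * b * c) ∧
    (a + b) * (a + c) * (b + c) / (4 * a * b * c) ≥ 2 := by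
  have hS := six_le_ratioSum ha hb hc
  have hprod := prod_add_div_eq_ratioSum ha.ne' hb.ne' hc.ne'
  have hschur := half_ratioSum_sub_one_le ha hb hc
  unfold ratioSum at hS hprod hschur
  refine ⟨abc_add_sum_cubes_div_le_of_triangle ha hb hc hab hbc hca, hschur, ?_, ?_, ?_⟩ <;>
    linarith
end
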